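/- Let k ≥ 2 be a natural number and define g_k(x) = x^(16k)·(x-2k+1)^(16k)·∏_{i ∈ {0,...,2k-1} \ {k-1,k}} (x - i). Then for all real x ∈ [k-1, k], g_k(x)/g_k(k-1) ≥ 1. -/
import Mathlib

noncomputable def gPoly (k : ℕ) (x : ℝ) : ℝ :=
  x ^ (16 * k) * (x - 2 * (k : ℝ) + 1) ^ (16 * k) *
    ∏ i ∈ Finset.range (2 * k) \ {k - 1, k}, (x - (i : ℝ))

lemma prodSplit (k : ℕ) (hk : 2 ≤ k) (x : ℝ) :
    ∏ i ∈ Finset.range (2 * k) \ {k - 1, k}, (x - (i : ℝ)) =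
      (-1 : ℝ) ^ (k - 1) *
        ∏ j ∈ Finset.Icc 2 k, ((x - (k : ℝ) + (j : ℝ)) * ((k : ℝ) - 1 + (j : ℝ) - x)) := by
  have hset : Finset.range (2 * k) \ {k - 1, k}
      = Finset.range (k - 1) ∪ Finset.Ico (k + 1) (2 * k) := by
    ext i
    simp only [Finset.mem_sdiff, Finset.mem_range, Finset.mem_insert, Finset.mem_singleton,
      Finset.mem_union, Finset.mem_Ico]
    omega
  have hdisj : Disjoint (Finset.range (k - 1)) (Finset.Ico (k + 1) (2 * k)) := by
    rw [Finset.disjoint_left]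
    intro a ha hb
    simp only [Finset.mem_range] at ha
    simp only [Finset.mem_Ico] at hb
    omega
  rw [hset, Finset.prod_union hdisj]
  have hA : ∏ i ∈ Finset.range (k - 1), (x - (i : ℝ))
      = ∏ j ∈ Finset.Icc 2 k, (x - (k : ℝ) + (j : ℝ)) := by
    apply Finset.prod_nbij' (fun i => k - i) (fun j => k - j)
    · intro a ha; simp only [Finset.mem_range] at ha; simp only [Finset.mem_Icc]; omega
    · intro a ha; simp only [Finset.mem_Icc] at ha; simp only [Finset.mem_range]; omega
    · intro a ha; simp only [Finset.mem_range] at ha; omega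
    · intro a ha; simp only [Finset.mem_Icc] at ha; omega
    · intro a ha
      simp only [Finset.mem_range] at ha
      have h1 : a ≤ k := by omega
      rw [Nat.cast_sub h1]
      ring
  have hB : ∏ i ∈ Finset.Ico (k + 1) (2 * k), (x - (i : ℝ))
      = (-1 : ℝ) ^ (k - 1) * ∏ j ∈ Finset.Icc 2 k, ((k : ℝ) - 1 + (j : ℝ) - x) := by
    have h1 : ∏ i ∈ Finset.Ico (k + 1) (2 * k), (x - (i : ℝ))
        = ∏ j ∈ Finset.Icc 2 k, (x - ((k : ℝ) - 1 + (j : ℝ))) := by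
      apply Finset.prod_nbij' (fun i => i - k + 1) (fun j => k - 1 + j)
      · intro a ha; simp only [Finset.mem_Ico] at ha; simp only [Finset.mem_Icc]; omega
      · intro a ha; simp only [Finset.mem_Icc] at ha; simp only [Finset.mem_Ico]; omega
      · intro a ha; simp only [Finset.mem_Ico] at ha; omega
      · intro a ha; simp only [Finset.mem_Icc] at ha; omega
      · intro a ha
        simp only [Finset.mem_Ico] at ha
        have h1 : k ≤ a := by omega
        push_cast [Nat.cast_sub h1]
        ring
    rw [h1]
    have h2 : ∀ j ∈ Finset.Icc 2 k, x - ((k : ℝ) - 1 + (j : ℝ))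
        = (-1) * ((k : ℝ) - 1 + (j : ℝ) - x) := by intro j _; ring
    rw [Finset.prod_congr rfl h2, Finset.prod_mul_distrib, Finset.prod_const,
      Nat.card_Icc]
    have hc : k + 1 - 2 = k - 1 := by omega
    rw [hc]
  rw [hA, hB, Finset.prod_mul_distrib]
  ring

theorem stmt_6 (k : ℕ) (hk : 2 ≤ k) (x : ℝ)
    (hx : x ∈ Set.Icc ((k : ℝ) - 1) (k : ℝ)) :
    gPoly k x / gPoly k ((k : ℝ) - 1) ≥ 1 := by
  obtain ⟨hx1, hx2⟩ := hx
  have hk2 : (2 : ℝ) ≤ (k : ℝ) := by exact_mod_cast hk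
  set N := 16 * k with hN
  have hNeven : Even N := ⟨8 * k, by omega⟩
  have h1 : gPoly k x = (-1 : ℝ) ^ (k - 1) *
      (x ^ N * (x - 2 * (k : ℝ) + 1) ^ N *
        ∏ j ∈ Finset.Icc 2 k, ((x - (k : ℝ) + (j : ℝ)) * ((k : ℝ) - 1 + (j : ℝ) - x))) := by
    rw [gPoly, prodSplit k hk x]; ring
  have h2 : gPoly k ((k : ℝ) - 1) = (-1 : ℝ) ^ (k - 1) *
      (((k : ℝ) - 1) ^ N * ((k : ℝ)) ^ N *
        ∏ j ∈ Finset.Icc 2 k, (((j : ℝ) - 1) * (j : ℝ))) := by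
    rw [gPoly, prodSplit k hk ((k : ℝ) - 1)]
    have e1 : ((k : ℝ) - 1 - 2 * (k : ℝ) + 1) ^ N = ((k : ℝ)) ^ N := by
      have : ((k : ℝ) - 1 - 2 * (k : ℝ) + 1) = -(k : ℝ) := by ring
      rw [this, hNeven.neg_pow]
    rw [e1]
    have e2 : ∀ j ∈ Finset.Icc 2 k,
        (((k : ℝ) - 1) - (k : ℝ) + (j : ℝ)) * ((k : ℝ) - 1 + (j : ℝ) - ((k : ℝ) - 1))
          = ((j : ℝ) - 1) * (j : ℝ) := by intro j _; ring
    rw [Finset.prod_congr rfl e2]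
    ring
  -- positivity facts
  have hx0 : (0 : ℝ) < x := by linarith
  have hx3 : (0 : ℝ) < 2 * (k : ℝ) - 1 - x := by linarith
  have hjpos : ∀ j ∈ Finset.Icc 2 k, (0 : ℝ) < ((j : ℝ) - 1) * (j : ℝ) := by
    intro j hj
    simp only [Finset.mem_Icc] at hj
    have : (2 : ℝ) ≤ (j : ℝ) := by exact_mod_cast hj.1
    nlinarith
  have hP0pos : (0 : ℝ) < ∏ j ∈ Finset.Icc 2 k, (((j : ℝ) - 1) * (j : ℝ)) :=
    Finset.prod_pos hjpos
  have hdenpos : (0 : ℝ) <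
      ((k : ℝ) - 1) ^ N * ((k : ℝ)) ^ N *
        ∏ j ∈ Finset.Icc 2 k, (((j : ℝ) - 1) * (j : ℝ)) := by
    have : (0:ℝ) < (k:ℝ) - 1 := by linarith
    positivity
  -- numerator ≥ denominator
  have hbase : ((k : ℝ) - 1) * (k : ℝ) ≤ x * (2 * (k : ℝ) - 1 - x) := by nlinarith
  have hprodle : ∏ j ∈ Finset.Icc 2 k, (((j : ℝ) - 1) * (j : ℝ))
      ≤ ∏ j ∈ Finset.Icc 2 k, ((x - (k : ℝ) + (j : ℝ)) * ((k : ℝ) - 1 + (j : ℝ) - x)) := by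
    apply Finset.prod_le_prod
    · intro j hj; exact le_of_lt (hjpos j hj)
    · intro j hj
      simp only [Finset.mem_Icc] at hj
      have : (2 : ℝ) ≤ (j : ℝ) := by exact_mod_cast hj.1
      nlinarith
  have hpowle : (((k : ℝ) - 1) * (k : ℝ)) ^ N ≤ (x * (2 * (k : ℝ) - 1 - x)) ^ N := by
    apply pow_le_pow_left₀ _ hbase
    nlinarith
  have heven : (x - 2 * (k : ℝ) + 1) ^ N = (2 * (k : ℝ) - 1 - x) ^ N := by
    have : (x - 2 * (k : ℝ) + 1) = -(2 * (k : ℝ) - 1 - x) := by ring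
    rw [this, hNeven.neg_pow]
  have hnum : ((k : ℝ) - 1) ^ N * ((k : ℝ)) ^ N *
        (∏ j ∈ Finset.Icc 2 k, (((j : ℝ) - 1) * (j : ℝ)))
      ≤ x ^ N * (x - 2 * (k : ℝ) + 1) ^ N *
        ∏ j ∈ Finset.Icc 2 k, ((x - (k : ℝ) + (j : ℝ)) * ((k : ℝ) - 1 + (j : ℝ) - x)) := by
    rw [heven, ← mul_pow, ← mul_pow]
    exact mul_le_mul hpowle hprodle (le_of_lt hP0pos) (by positivity)
  rw [h1, h2, mul_div_mul_left _ _ (by positivity : ((-1:ℝ)^(k-1)) ≠ 0)]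
  rw [ge_iff_le, le_div_iff₀ hdenpos, one_mul]
  exact hnum
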